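/- Let {φ(θ), θ ∈ T_0} be an admissible family of nonnegative random variables which is both right and left continuous along stopping times in expectation and satisfies E[ess sup_{θ ∈ T_0} φ(θ)] < ∞. Let v(S) = ess sup_{θ ∈ T_S} E[φ(θ) | F_S]. Then for every S ∈ T_0 the stopping time θ*(S) := ess inf {θ ∈ T_S : v(θ) = φ(θ) a.s.} is optimal for v(S), i.e. v(S) = E[φ(θ*(S)) | F_S] almost surely. -/

import Mathlib

open MeasureTheory Filter Set Topology

variable {Ω : Type*}

/-- `τ` belongs to `T_0`: it is a stopping time of `𝓕` with values in `[0, T]`. -/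
def MemT0 {m0 : MeasurableSpace Ω} (𝓕 : MeasureTheory.Filtration ℝ m0) (T : ℝ)
    (τ : Ω → ℝ) : Prop :=
  MeasureTheory.IsStoppingTime 𝓕 (fun ω => (τ ω : WithTop ℝ)) ∧ ∀ ω, τ ω ∈ Set.Icc (0 : ℝ) T

/-- `v` is an essential supremum of the family `f i`, `i` ranging over `{i | P i}`:
it dominates every member a.s. and is a.s. below any other a.s. upper bound. -/
def IsEssSupFam {m0 : MeasurableSpace Ω} (μ : MeasureTheory.Measure Ω) {ι : Sort*}
    (P : ι → Prop) (f : ι → Ω → ℝ) (v : Ω → ℝ) : Prop :=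
  (∀ i, P i → f i ≤ᵐ[μ] v) ∧ ∀ w : Ω → ℝ, (∀ i, P i → f i ≤ᵐ[μ] w) → v ≤ᵐ[μ] w

/-- `v` is an essential infimum of the family `f i`, `i` ranging over `{i | P i}`. -/
def IsEssInfFam {m0 : MeasurableSpace Ω} (μ : MeasureTheory.Measure Ω) {ι : Sort*}
    (P : ι → Prop) (f : ι → Ω → ℝ) (v : Ω → ℝ) : Prop :=
  (∀ i, P i → v ≤ᵐ[μ] f i) ∧ ∀ w : Ω → ℝ, (∀ i, P i → w ≤ᵐ[μ] f i) → w ≤ᵐ[μ] v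

/-- An admissible family of nonnegative random variables indexed by the stopping
times in `T_0`: `φ τ` is a nonnegative `F_τ`-measurable random variable, and
`φ τ = φ τ'` a.s. on `{τ = τ'}`. -/
def Admissible {m0 : MeasurableSpace Ω} (𝓕 : MeasureTheory.Filtration ℝ m0) (T : ℝ)
    (μ : MeasureTheory.Measure Ω) (φ : (Ω → ℝ) → Ω → ℝ) : Prop :=
  (∀ τ (hτ : MemT0 𝓕 T τ),
      Measurable[hτ.1.measurableSpace] (φ τ) ∧ ∀ ω, 0 ≤ φ τ ω) ∧
  ∀ τ τ', MemT0 𝓕 T τ → MemT0 𝓕 T τ' →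
    ∀ᵐ ω ∂μ, τ ω = τ' ω → φ τ ω = φ τ' ω

/-- An a.e. variant of admissibility (for families defined only up to a.s. equality,
such as value-function families): `φ τ` is a.s. nonnegative and a.s. equal to some
`F_τ`-measurable random variable, and `φ τ = φ τ'` a.s. on `{τ = τ'}`. -/
def AdmissibleAE {m0 : MeasurableSpace Ω} (𝓕 : MeasureTheory.Filtration ℝ m0) (T : ℝ)
    (μ : MeasureTheory.Measure Ω) (φ : (Ω → ℝ) → Ω → ℝ) : Prop :=
  (∀ τ (hτ : MemT0 𝓕 T τ),
      (∀ᵐ ω ∂μ, 0 ≤ φ τ ω) ∧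
      ∃ w : Ω → ℝ, Measurable[hτ.1.measurableSpace] w ∧ φ τ =ᵐ[μ] w) ∧
  ∀ τ τ', MemT0 𝓕 T τ → MemT0 𝓕 T τ' →
    ∀ᵐ ω ∂μ, τ ω = τ' ω → φ τ ω = φ τ' ω

/-- A biadmissible family: `ψ τ S` is a nonnegative `F_{τ ∨ S}`-measurable random
variable, and `ψ τ S = ψ τ' S'` a.s. on `{τ = τ'} ∩ {S = S'}`. -/
def Biadmissible {m0 : MeasurableSpace Ω} (𝓕 : MeasureTheory.Filtration ℝ m0) (T : ℝ)
    (μ : MeasureTheory.Measure Ω) (ψ : (Ω → ℝ) → (Ω → ℝ) → Ω → ℝ) : Prop :=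
  (∀ τ S (hτ : MemT0 𝓕 T τ) (hS : MemT0 𝓕 T S),
      Measurable[(hτ.1.max hS.1).measurableSpace] (ψ τ S) ∧ ∀ ω, 0 ≤ ψ τ S ω) ∧
  ∀ τ τ' S S', MemT0 𝓕 T τ → MemT0 𝓕 T τ' → MemT0 𝓕 T S → MemT0 𝓕 T S' →
    ∀ᵐ ω ∂μ, τ ω = τ' ω → S ω = S' ω → ψ τ S ω = ψ τ' S' ω

/-- `θn ↓ θ` a.s.: the sequence is a.s. nonincreasing and converges a.s. to `θ`. -/
def DownAS {m0 : MeasurableSpace Ω} (μ : MeasureTheory.Measure Ω)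
    (θn : ℕ → Ω → ℝ) (θ : Ω → ℝ) : Prop :=
  ∀ᵐ ω ∂μ, (∀ n, θn (n + 1) ω ≤ θn n ω) ∧
    Filter.Tendsto (fun n => θn n ω) Filter.atTop (nhds (θ ω))

/-- `θn ↑ θ` a.s.: the sequence is a.s. nondecreasing and converges a.s. to `θ`. -/
def UpAS {m0 : MeasurableSpace Ω} (μ : MeasureTheory.Measure Ω)
    (θn : ℕ → Ω → ℝ) (θ : Ω → ℝ) : Prop :=
  ∀ᵐ ω ∂μ, (∀ n, θn n ω ≤ θn (n + 1) ω) ∧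
    Filter.Tendsto (fun n => θn n ω) Filter.atTop (nhds (θ ω))

/-- The family `φ` is right continuous along stopping times in expectation. -/
def RCE {m0 : MeasurableSpace Ω} (𝓕 : MeasureTheory.Filtration ℝ m0) (T : ℝ)
    (μ : MeasureTheory.Measure Ω) (φ : (Ω → ℝ) → Ω → ℝ) : Prop :=
  ∀ θ, MemT0 𝓕 T θ → ∀ θn : ℕ → Ω → ℝ, (∀ n, MemT0 𝓕 T (θn n)) → DownAS μ θn θ →
    Filter.Tendsto (fun n => ∫ ω, φ (θn n) ω ∂μ) Filter.atTop (nhds (∫ ω, φ θ ω ∂μ))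

/-- The family `φ` is left continuous along stopping times in expectation. -/
def LCE {m0 : MeasurableSpace Ω} (𝓕 : MeasureTheory.Filtration ℝ m0) (T : ℝ)
    (μ : MeasureTheory.Measure Ω) (φ : (Ω → ℝ) → Ω → ℝ) : Prop :=
  ∀ θ, MemT0 𝓕 T θ → ∀ θn : ℕ → Ω → ℝ, (∀ n, MemT0 𝓕 T (θn n)) → UpAS μ θn θ →
    Filter.Tendsto (fun n => ∫ ω, φ (θn n) ω ∂μ) Filter.atTop (nhds (∫ ω, φ θ ω ∂μ))

/-- The biadmissible family `ψ` is uniformly right continuous in expectation along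
stopping times: for `S_n ↓ S` a.s. (all in `T_0`), the expectation of the essential
supremum over `θ ∈ T_0` of `|ψ(θ, S) - ψ(θ, S_n)|` (resp. `|ψ(S, θ) - ψ(S_n, θ)|`)
tends to `0`. -/
def URCE {m0 : MeasurableSpace Ω} (𝓕 : MeasureTheory.Filtration ℝ m0) (T : ℝ)
    (μ : MeasureTheory.Measure Ω) (ψ : (Ω → ℝ) → (Ω → ℝ) → Ω → ℝ) : Prop :=
  ∀ S, MemT0 𝓕 T S → ∀ Sn : ℕ → Ω → ℝ, (∀ n, MemT0 𝓕 T (Sn n)) → DownAS μ Sn S →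
    (∀ D : ℕ → Ω → ℝ,
      (∀ n, IsEssSupFam μ (MemT0 𝓕 T) (fun θ ω => |ψ θ S ω - ψ θ (Sn n) ω|) (D n)) →
      Filter.Tendsto (fun n => ∫ ω, D n ω ∂μ) Filter.atTop (nhds 0)) ∧
    ∀ D : ℕ → Ω → ℝ,
      (∀ n, IsEssSupFam μ (MemT0 𝓕 T) (fun θ ω => |ψ S θ ω - ψ (Sn n) θ ω|) (D n)) →
      Filter.Tendsto (fun n => ∫ ω, D n ω ∂μ) Filter.atTop (nhds 0)

/-- The biadmissible family `ψ` is uniformly left continuous in expectation along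
stopping times. -/
def ULCE {m0 : MeasurableSpace Ω} (𝓕 : MeasureTheory.Filtration ℝ m0) (T : ℝ)
    (μ : MeasureTheory.Measure Ω) (ψ : (Ω → ℝ) → (Ω → ℝ) → Ω → ℝ) : Prop :=
  ∀ S, MemT0 𝓕 T S → ∀ Sn : ℕ → Ω → ℝ, (∀ n, MemT0 𝓕 T (Sn n)) → UpAS μ Sn S →
    (∀ D : ℕ → Ω → ℝ,
      (∀ n, IsEssSupFam μ (MemT0 𝓕 T) (fun θ ω => |ψ θ S ω - ψ θ (Sn n) ω|) (D n)) →
      Filter.Tendsto (fun n => ∫ ω, D n ω ∂μ) Filter.atTop (nhds 0)) ∧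
    ∀ D : ℕ → Ω → ℝ,
      (∀ n, IsEssSupFam μ (MemT0 𝓕 T) (fun θ ω => |ψ S θ ω - ψ (Sn n) θ ω|) (D n)) →
      Filter.Tendsto (fun n => ∫ ω, D n ω ∂μ) Filter.atTop (nhds 0)

/-!
For `λ < 1` let `θ^λ(S)` be the essential infimum of the stopping times `θ ≥ S` with
`λ v(θ) ≤ φ(θ)`. Right continuity in expectation of `φ`, and hence of `E[v]`, shows that `θ^λ(S)`
satisfies this inequality itself, and comparing `φ(τ)` with `λ v(τ) + (1 - λ) E[v(θ^λ(τ)) | F_τ]`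
shows that `v` is a martingale between `S` and `θ^λ(S)`. As `λ ↑ 1` the times `θ^λ(S)` increase to
some `θ̂ ≤ θ*(S)`, and left continuity in expectation gives `E[v(S)] ≤ E[φ(θ̂)]`. Since
`E[φ(θ̂) | F_S] ≤ v(S)` and `φ ≤ v`, this forces `v(S) = E[φ(θ̂) | F_S]` and `v(θ̂) = φ(θ̂)`,
hence `θ̂ = θ*(S)`.
-/

namespace MemT0

variable {m0 : MeasurableSpace Ω} {μ : Measure Ω} {𝓕 : Filtration ℝ m0} {T : ℝ}
  {τ σ ρ : Ω → ℝ}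

lemma nonneg (hτ : MemT0 𝓕 T τ) (ω : Ω) : 0 ≤ τ ω := (hτ.2 ω).1

lemma le_T (hτ : MemT0 𝓕 T τ) (ω : Ω) : τ ω ≤ T := (hτ.2 ω).2

lemma measurableSet_le (hτ : MemT0 𝓕 T τ) (t : ℝ) :
    MeasurableSet[𝓕 t] {ω | τ ω ≤ t} := by
  simpa only [WithTop.coe_le_coe] using hτ.1 t

lemma measurable (hτ : MemT0 𝓕 T τ) : Measurable τ :=
  measurable_of_Iic fun t => 𝓕.le t _ (hτ.measurableSet_le t)

lemma integrable [IsFiniteMeasure μ] (hτ : MemT0 𝓕 T τ) : Integrable τ μ :=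
  (integrable_const T).mono' hτ.measurable.aestronglyMeasurable <| ae_of_all _ fun ω => by
    rw [Real.norm_eq_abs, abs_of_nonneg (hτ.nonneg ω)]
    exact hτ.le_T ω

lemma min (hτ : MemT0 𝓕 T τ) (hσ : MemT0 𝓕 T σ) : MemT0 𝓕 T (fun ω => min (τ ω) (σ ω)) :=
  ⟨hτ.1.min hσ.1, fun ω => ⟨le_min (hτ.nonneg ω) (hσ.nonneg ω), min_le_of_left_le (hτ.le_T ω)⟩⟩

lemma max (hτ : MemT0 𝓕 T τ) (hσ : MemT0 𝓕 T σ) : MemT0 𝓕 T (fun ω => max (τ ω) (σ ω)) :=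
  ⟨hτ.1.max hσ.1, fun ω => ⟨le_max_of_le_left (hτ.nonneg ω), max_le (hτ.le_T ω) (hσ.le_T ω)⟩⟩

lemma piecewise (hρ : MemT0 𝓕 T ρ) (hτ : MemT0 𝓕 T τ) (hσ : MemT0 𝓕 T σ) {A : Set Ω}
    [DecidablePred (· ∈ A)] (hA : MeasurableSet[hρ.1.measurableSpace] A) (hρτ : ∀ ω, ρ ω ≤ τ ω)
    (hρσ : ∀ ω, ρ ω ≤ σ ω) : MemT0 𝓕 T (A.piecewise τ σ) := by
  refine ⟨fun t => ?_, fun ω => ?_⟩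
  · have hAt : MeasurableSet[𝓕 t] (A ∩ {ω | ρ ω ≤ t}) := by
      simpa only [WithTop.coe_le_coe] using ((hρ.1.measurableSet A).mp hA).2 t
    have hset : {ω | ((A.piecewise τ σ ω : ℝ) : WithTop ℝ) ≤ t} =
        (A ∩ {ω | ρ ω ≤ t}) ∩ {ω | τ ω ≤ t} ∪
          (A ∩ {ω | ρ ω ≤ t})ᶜ ∩ ({ω | ρ ω ≤ t} ∩ {ω | σ ω ≤ t}) := by
      ext ω
      have := hρτ ω
      have := hρσ ω
      by_cases hω : ω ∈ A <;> simp [hω] <;> grind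
    rw [hset]
    exact (hAt.inter (hτ.measurableSet_le t)).union
      (hAt.compl.inter ((hρ.measurableSet_le t).inter (hσ.measurableSet_le t)))
  · by_cases hω : ω ∈ A
    · simpa [hω] using hτ.2 ω
    · simpa [hω] using hσ.2 ω

lemma iSup {θ : ℕ → Ω → ℝ} (hθ : ∀ n, MemT0 𝓕 T (θ n)) :
    MemT0 𝓕 T (fun ω => ⨆ n, θ n ω) := by
  have hbdd : ∀ ω, BddAbove (Set.range fun n => θ n ω) :=
    fun ω => ⟨T, by rintro _ ⟨n, rfl⟩; exact (hθ n).le_T ω⟩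
  refine ⟨fun t => ?_, fun ω => ⟨((hθ 0).nonneg ω).trans (le_ciSup (hbdd ω) 0),
    ciSup_le fun n => (hθ n).le_T ω⟩⟩
  have hset : {ω | (((⨆ n, θ n ω : ℝ)) : WithTop ℝ) ≤ t} = ⋂ n, {ω | θ n ω ≤ t} := by
    ext ω
    simp [ciSup_le_iff (hbdd ω)]
  rw [hset]
  exact MeasurableSet.iInter fun n => (hθ n).measurableSet_le t

lemma partialSups {θ : ℕ → Ω → ℝ} (hθ : ∀ n, MemT0 𝓕 T (θ n)) (n : ℕ) :
    MemT0 𝓕 T (partialSups θ n) := by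
  induction n with
  | zero => simpa using hθ 0
  | succ n ih =>
    rw [← Order.succ_eq_add_one, partialSups_succ]
    exact ih.max (hθ _)

/-- Right continuity of the filtration is what makes a countable infimum a stopping time:
`{inf θ n ≤ t} = ⋂ₖ ⋃ₙ {θ n < t + 1/(k+1)}`, and for each `u > t` the tail `k ≥ K` of this
intersection is `F_u`-measurable. -/
lemma iInf (hFright : ∀ t : ℝ, 𝓕 t = ⨅ s ∈ Set.Ioi t, 𝓕 s) {θ : ℕ → Ω → ℝ}
    (hθ : ∀ n, MemT0 𝓕 T (θ n)) : MemT0 𝓕 T (fun ω => ⨅ n, θ n ω) := by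
  have hbdd : ∀ ω, BddBelow (Set.range fun n => θ n ω) :=
    fun ω => ⟨0, by rintro _ ⟨n, rfl⟩; exact (hθ n).nonneg ω⟩
  refine ⟨fun t => ?_, fun ω => ⟨le_ciInf fun n => (hθ n).nonneg ω,
    (ciInf_le (hbdd ω) 0).trans ((hθ 0).le_T ω)⟩⟩
  set ε : ℕ → ℝ := fun k => 1 / ((k : ℝ) + 1)
  have hε : ∀ k, 0 < ε k := fun k => Nat.one_div_pos_of_nat
  have hset : ∀ K, {ω | (((⨅ n, θ n ω : ℝ)) : WithTop ℝ) ≤ t} =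
      ⋂ k, ⋃ n, {ω | θ n ω < t + ε (k + K)} := by
    intro K
    ext ω
    simp only [WithTop.coe_le_coe, Set.mem_ofPred_eq, Set.mem_iInter, Set.mem_iUnion]
    constructor
    · exact fun h k => exists_lt_of_ciInf_lt (by linarith [hε (k + K)])
    · intro h
      refine le_of_forall_pos_lt_add fun δ hδ => ?_
      obtain ⟨k, hk⟩ := exists_nat_one_div_lt hδ
      obtain ⟨n, hn⟩ := h k
      have hεk : ε (k + K) ≤ 1 / ((k : ℝ) + 1) :=
        Nat.one_div_le_one_div (Nat.le_add_right k K)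
      linarith [ciInf_le (hbdd ω) n]
  rw [hFright t]
  refine MeasurableSpace.measurableSet_iInf.mpr fun u => MeasurableSpace.measurableSet_iInf.mpr
    fun (htu : t < u) => ?_
  obtain ⟨K, hK⟩ := exists_nat_one_div_lt (sub_pos.mpr htu)
  rw [hset K]
  refine MeasurableSet.iInter fun k => MeasurableSet.iUnion fun n => ?_
  have hle : t + ε (k + K) ≤ u := by
    have : ε (k + K) ≤ 1 / ((K : ℝ) + 1) := Nat.one_div_le_one_div (Nat.le_add_left K k)
    linarith
  exact 𝓕.mono hle _ (by simpa only [WithTop.coe_lt_coe] using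
    (hθ n).1.measurableSet_lt (t + ε (k + K)))

end MemT0

lemma max_ae_eq_of_ae_le {m0 : MeasurableSpace Ω} {μ : Measure Ω} {τ ρ : Ω → ℝ}
    (hρτ : ρ ≤ᵐ[μ] τ) : (fun ω => max (τ ω) (ρ ω)) =ᵐ[μ] τ := by
  filter_upwards [hρτ] with ω h using max_eq_left h

lemma partialSups_ae_eq_of_ae_monotone {m0 : MeasurableSpace Ω} {μ : Measure Ω} {β : Type*}
    [LinearOrder β] {θ : ℕ → Ω → β} (hmono : ∀ n, θ n ≤ᵐ[μ] θ (n + 1)) (n : ℕ) :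
    partialSups θ n =ᵐ[μ] θ n := by
  induction n with
  | zero => rw [partialSups_zero]
  | succ n ih =>
    rw [← Order.succ_eq_add_one, partialSups_succ]
    filter_upwards [ih, hmono n] with ω h₁ h₂
    simp [h₁, h₂]

section ConditionalExpectation

variable {m m0 : MeasurableSpace Ω} {μ : Measure Ω} {f g : Ω → ℝ}

lemma condExp_ae_eq_on_of_ae_eq_on {A : Set Ω} (hf : Integrable f μ) (hg : Integrable g μ)
    (hA : MeasurableSet[m] A) (hfg : ∀ᵐ ω ∂μ, ω ∈ A → f ω = g ω) :
    ∀ᵐ ω ∂μ, ω ∈ A → μ[f|m] ω = μ[g|m] ω := by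
  have hind : A.indicator f =ᵐ[μ] A.indicator g := by
    filter_upwards [hfg] with ω h
    by_cases hω : ω ∈ A <;> simp [hω, h]
  filter_upwards [condExp_indicator (m := m) hf hA, condExp_indicator (m := m) hg hA,
    condExp_congr_ae (m := m) hind] with ω hf' hg' hfg' hω
  simpa [hω, hf', hg'] using hfg'

lemma condExp_mono_of_forall_setIntegral_le (hm : m ≤ m0) [SigmaFinite (μ.trim hm)]
    (hf : Integrable f μ) (hg : Integrable g μ)
    (hfg : ∀ A, MeasurableSet[m] A → ∫ ω in A, f ω ∂μ ≤ ∫ ω in A, g ω ∂μ) :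
    μ[f|m] ≤ᵐ[μ] μ[g|m] := by
  refine ae_le_of_ae_le_trim (hm := hm) (ae_le_of_forall_setIntegral_le
    (integrable_condExp.trim hm stronglyMeasurable_condExp)
    (integrable_condExp.trim hm stronglyMeasurable_condExp) fun A hA _ => ?_)
  rw [← setIntegral_trim hm stronglyMeasurable_condExp hA,
    ← setIntegral_trim hm stronglyMeasurable_condExp hA,
    setIntegral_condExp hm hf hA, setIntegral_condExp hm hg hA]
  exact hfg A hA

lemma condExp_add_smul_ae_eq (hf : Integrable f μ) (hg : Integrable g μ) (a b : ℝ) :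
    μ[a • f + b • g|m] =ᵐ[μ] a • μ[f|m] + b • μ[g|m] :=
  (condExp_add (hf.smul a) (hg.smul b) m).trans ((condExp_smul a f m).add (condExp_smul b g m))

lemma condExp_ae_eq_on_eq_of_isStoppingTime {ι : Type*} [LinearOrder ι] [TopologicalSpace ι]
    [OrderTopology ι] [SecondCountableTopology ι] [IsFiniteMeasure μ] {𝓕 : Filtration ι m0}
    {τ σ : Ω → WithTop ι} (hτ : IsStoppingTime 𝓕 τ) (hσ : IsStoppingTime 𝓕 σ) (f : Ω → ℝ) :
    ∀ᵐ ω ∂μ, τ ω = σ ω → μ[f|hτ.measurableSpace] ω = μ[f|hσ.measurableSpace] ω := by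
  have hmin : (hτ.min hσ).measurableSpace = (hσ.min hτ).measurableSpace := by
    rw [hτ.measurableSpace_min hσ, hσ.measurableSpace_min hτ, inf_comm]
  have hτσ := ae_imp_of_ae_restrict
    (condExp_min_stopping_time_ae_eq_restrict_le (μ := μ) (f := f) hτ hσ)
  have hστ := ae_imp_of_ae_restrict
    (condExp_min_stopping_time_ae_eq_restrict_le (μ := μ) (f := f) hσ hτ)
  rw [← hmin] at hστ
  filter_upwards [hτσ, hστ] with ω h₁ h₂ heq
  exact (h₁ heq.le).symm.trans (h₂ heq.ge)

end ConditionalExpectation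

section EssentialSupremum

variable {m0 : MeasurableSpace Ω} {μ : Measure Ω} {F : ℕ → Ω → ℝ} {g : Ω → ℝ}

lemma ae_tendsto_iSup_of_ae_monotone (hmono : ∀ n, F n ≤ᵐ[μ] F (n + 1))
    (hFg : ∀ n, F n ≤ᵐ[μ] g) :
    ∀ᵐ ω ∂μ, Monotone (fun n => F n ω) ∧
      Tendsto (fun n => F n ω) atTop (𝓝 (⨆ n, F n ω)) ∧ ⨆ n, F n ω ≤ g ω := by
  filter_upwards [ae_all_iff.2 hmono, ae_all_iff.2 hFg] with ω hmono hFg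
  have hmono' : Monotone (fun n => F n ω) := monotone_nat_of_le_succ hmono
  exact ⟨hmono', tendsto_atTop_ciSup hmono' ⟨g ω, by rintro _ ⟨n, rfl⟩; exact hFg n⟩,
    ciSup_le hFg⟩

lemma integrable_iSup_of_ae_monotone (hF : ∀ n, Integrable (F n) μ)
    (hmono : ∀ n, F n ≤ᵐ[μ] F (n + 1)) (hFg : ∀ n, F n ≤ᵐ[μ] g) (hg : Integrable g μ) :
    Integrable (fun ω => ⨆ n, F n ω) μ := by
  refine ((hF 0).abs.add hg.abs).mono'
    (AEMeasurable.iSup fun n => (hF n).aemeasurable).aestronglyMeasurable ?_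
  filter_upwards [ae_tendsto_iSup_of_ae_monotone hmono hFg] with ω ⟨hmono', hlim, hle⟩
  have h0 : F 0 ω ≤ ⨆ n, F n ω := hmono'.ge_of_tendsto hlim 0
  show |⨆ n, F n ω| ≤ |F 0 ω| + |g ω|
  rw [abs_le]
  constructor <;> linarith [neg_abs_le (F 0 ω), le_abs_self (g ω), abs_nonneg (F 0 ω),
    abs_nonneg (g ω)]

lemma tendsto_integral_iSup_of_ae_monotone (hF : ∀ n, Integrable (F n) μ)
    (hmono : ∀ n, F n ≤ᵐ[μ] F (n + 1)) (hFg : ∀ n, F n ≤ᵐ[μ] g) (hg : Integrable g μ) :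
    Tendsto (fun n => ∫ ω, F n ω ∂μ) atTop (𝓝 (∫ ω, ⨆ n, F n ω ∂μ)) := by
  have hlim := ae_tendsto_iSup_of_ae_monotone hmono hFg
  exact integral_tendsto_of_tendsto_of_monotone hF (integrable_iSup_of_ae_monotone hF hmono hFg hg)
    (hlim.mono fun _ h => h.1) (hlim.mono fun _ h => h.2.1)

lemma ae_eq_of_ae_le_of_integral_le {f h : Ω → ℝ} (hfh : f ≤ᵐ[μ] h) (hf : Integrable f μ)
    (hh : Integrable h μ) (hint : ∫ ω, h ω ∂μ ≤ ∫ ω, f ω ∂μ) : f =ᵐ[μ] h :=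
  (integral_eq_iff_of_ae_le hf hh hfh).1 (le_antisymm (integral_mono_ae hf hh hfh) hint)

lemma ae_le_of_integral_max_le {h v : Ω → ℝ} (hh : Integrable h μ) (hv : Integrable v μ)
    (hint : ∫ ω, max (h ω) (v ω) ∂μ ≤ ∫ ω, v ω ∂μ) : h ≤ᵐ[μ] v := by
  filter_upwards [ae_eq_of_ae_le_of_integral_le (ae_of_all _ fun ω => le_max_right (h ω) _) hv
    (hh.sup hv) hint] with ω hω
  exact hω ▸ le_max_left _ _

variable {ι : Sort*} {P : ι → Prop} {f : ι → Ω → ℝ}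

lemma IsEssSupFam.ae_eq {v w : Ω → ℝ} (hv : IsEssSupFam μ P f v) (hw : IsEssSupFam μ P f w) :
    v =ᵐ[μ] w :=
  (hv.2 w hw.1).antisymm (hw.2 v hv.1)

lemma exists_seq_tendsto_iSup_integral (hfi : ∀ i, P i → Integrable (f i) μ)
    (hfg : ∀ i, P i → f i ≤ᵐ[μ] g) (hg : Integrable g μ) (hne : ∃ i, P i)
    (hdir : ∀ i j, P i → P j → ∃ k, P k ∧ f i ≤ᵐ[μ] f k ∧ f j ≤ᵐ[μ] f k) :
    ∃ (s : ℕ → {i // P i}) (c : ℝ), (∀ n, f (s n).1 ≤ᵐ[μ] f (s (n + 1)).1) ∧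
      Tendsto (fun n => ∫ ω, f (s n).1 ω ∂μ) atTop (𝓝 c) ∧ ∀ i, P i → ∫ ω, f i ω ∂μ ≤ c := by
  have : Nonempty {i // P i} := let ⟨i, hi⟩ := hne; ⟨⟨i, hi⟩⟩
  have hbdd : BddAbove (Set.range fun i : {i // P i} => ∫ ω, f i.1 ω ∂μ) :=
    ⟨∫ ω, g ω ∂μ, by rintro _ ⟨i, rfl⟩; exact integral_mono_ae (hfi i i.2) hg (hfg i i.2)⟩
  set c := ⨆ i : {i // P i}, ∫ ω, f i.1 ω ∂μ
  choose r hr using fun n : ℕ => exists_lt_of_lt_ciSup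
    (sub_lt_self c (Nat.one_div_pos_of_nat (n := n)))
  choose D hD hDl hDr using fun i j : {i // P i} => hdir i j i.2 j.2
  let s : ℕ → {i // P i} := fun n => Nat.rec (r 0) (fun n sn => ⟨D sn (r (n + 1)), hD ..⟩) n
  have hsr : ∀ n, ∫ ω, f (r n).1 ω ∂μ ≤ ∫ ω, f (s n).1 ω ∂μ := by
    rintro (_ | n)
    · exact le_rfl
    · exact integral_mono_ae (hfi _ (r _).2) (hfi _ (s (n + 1)).2) (hDr (s n) (r (n + 1)))
  refine ⟨s, c, fun n => hDl .., tendsto_of_tendsto_of_tendsto_of_le_of_le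
    (by simpa using (tendsto_const_nhds (x := c)).sub tendsto_one_div_add_atTop_nhds_zero_nat)
    tendsto_const_nhds (fun n => ((hr n).trans_le (hsr n)).le) (fun n => le_ciSup hbdd (s n)),
    fun i hi => le_ciSup hbdd ⟨i, hi⟩⟩

theorem exists_seq_isEssSupFam_of_directed (hfi : ∀ i, P i → Integrable (f i) μ)
    (hfg : ∀ i, P i → f i ≤ᵐ[μ] g) (hg : Integrable g μ) (hne : ∃ i, P i)
    (hdir : ∀ i j, P i → P j → ∃ k, P k ∧ f i ≤ᵐ[μ] f k ∧ f j ≤ᵐ[μ] f k) :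
    ∃ s : ℕ → ι, (∀ n, P (s n)) ∧ (∀ n, f (s n) ≤ᵐ[μ] f (s (n + 1))) ∧
      IsEssSupFam μ P f (fun ω => ⨆ n, f (s n) ω) := by
  obtain ⟨s, c, hmono, hlim, hle⟩ := exists_seq_tendsto_iSup_integral hfi hfg hg hne hdir
  have hFi : ∀ n, Integrable (f (s n).1) μ := fun n => hfi _ (s n).2
  have hFg : ∀ n, f (s n).1 ≤ᵐ[μ] g := fun n => hfg _ (s n).2
  have hvi := integrable_iSup_of_ae_monotone hFi hmono hFg hg
  have hvc : ∫ ω, ⨆ n, f (s n).1 ω ∂μ = c :=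
    tendsto_nhds_unique (tendsto_integral_iSup_of_ae_monotone hFi hmono hFg hg) hlim
  have hvlim := ae_tendsto_iSup_of_ae_monotone hmono hFg
  refine ⟨fun n => s n, fun n => (s n).2, hmono, fun i hi => ?_, fun w hw => ?_⟩
  · -- `max (f i) (f (s n))` lies below a member of the family, so in the limit
    -- `∫ max (f i) v ≤ c = ∫ v`.
    refine ae_le_of_integral_max_le (hfi i hi) hvi (hvc ▸ le_of_tendsto'
      (integral_tendsto_of_tendsto_of_monotone (fun n => (hfi i hi).sup (hFi n))
        ((hfi i hi).sup hvi) (hvlim.mono fun _ h _ _ hab => max_le_max le_rfl (h.1 hab))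
        (hvlim.mono fun _ h => tendsto_const_nhds.max h.2.1)) fun n => ?_)
    obtain ⟨k, hk, hik, hnk⟩ := hdir i (s n) hi (s n).2
    refine (integral_mono_ae ((hfi i hi).sup (hFi n)) (hfi k hk) ?_).trans (hle k hk)
    filter_upwards [hik, hnk] with ω h₁ h₂ using max_le h₁ h₂
  · filter_upwards [ae_all_iff.2 fun n => hw _ (s n).2, hvlim] with ω hw ⟨_, hlim, _⟩
    exact le_of_tendsto' hlim hw

end EssentialSupremum

/-- The essential supremum of `-θ`, realised along running minima. -/
theorem exists_antitone_seq_iInf_ae_le {m0 : MeasurableSpace Ω} {μ : Measure Ω}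
    [IsFiniteMeasure μ] {𝓕 : Filtration ℝ m0} {T : ℝ} {Q : (Ω → ℝ) → Prop}
    (hQ : ∀ θ, Q θ → MemT0 𝓕 T θ) (hne : ∃ θ, Q θ)
    (hmin : ∀ θ θ', Q θ → Q θ' → Q (fun ω => min (θ ω) (θ' ω))) :
    ∃ θ : ℕ → Ω → ℝ, (∀ n, Q (θ n)) ∧ Antitone θ ∧
      ∀ η, Q η → (fun ω => ⨅ n, θ n ω) ≤ᵐ[μ] η := by
  obtain ⟨s, hsQ, -, hsup⟩ := exists_seq_isEssSupFam_of_directed (μ := μ) (P := Q)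
    (f := fun θ ω => -θ ω) (g := 0) (fun θ hθ => (hQ θ hθ).integrable.neg)
    (fun θ hθ => ae_of_all _ fun ω => neg_nonpos.2 ((hQ θ hθ).nonneg ω)) (integrable_zero _ _ _)
    hne fun θ θ' hθ hθ' => ⟨_, hmin θ θ' hθ hθ', ae_of_all _ fun ω => neg_le_neg (min_le_left _ _),
      ae_of_all _ fun ω => neg_le_neg (min_le_right _ _)⟩
  let θ : ℕ → Ω → ℝ := fun n => Nat.rec (s 0) (fun n θn ω => min (θn ω) (s (n + 1) ω)) n
  have hθQ : ∀ n, Q (θ n) := fun n => Nat.rec (hsQ 0) (fun n ih => hmin _ _ ih (hsQ (n + 1))) n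
  have hθs : ∀ n ω, θ n ω ≤ s n ω := by
    rintro (_ | n) ω
    exacts [le_rfl, min_le_right _ _]
  refine ⟨θ, hθQ, antitone_nat_of_succ_le fun n ω => min_le_left _ _, fun η hη => ?_⟩
  filter_upwards [hsup.1 η hη] with ω hω
  by_contra! hlt
  have hbdd : BddBelow (Set.range fun n => θ n ω) :=
    ⟨0, by rintro _ ⟨n, rfl⟩; exact (hQ _ (hθQ n)).nonneg ω⟩
  have : ⨆ n, -s n ω ≤ -⨅ n, θ n ω :=
    ciSup_le fun n => neg_le_neg ((ciInf_le hbdd n).trans (hθs n ω))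
  linarith

section ValueFamily

variable {m0 : MeasurableSpace Ω}

def IsConsistent (𝓕 : Filtration ℝ m0) (T : ℝ) (μ : Measure Ω) (ψ : (Ω → ℝ) → Ω → ℝ) : Prop :=
  ∀ τ τ', MemT0 𝓕 T τ → MemT0 𝓕 T τ' → ∀ᵐ ω ∂μ, τ ω = τ' ω → ψ τ ω = ψ τ' ω

def IsValueFamily (𝓕 : Filtration ℝ m0) (T : ℝ) (μ : Measure Ω) (φ V : (Ω → ℝ) → Ω → ℝ) :
    Prop :=
  ∀ S (hS : MemT0 𝓕 T S), IsEssSupFam μ (fun θ => MemT0 𝓕 T θ ∧ S ≤ᵐ[μ] θ)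
    (fun θ => μ[φ θ | hS.1.measurableSpace]) (V S)

structure IsDominatedReward (𝓕 : Filtration ℝ m0) (T : ℝ) (μ : Measure Ω)
    (φ : (Ω → ℝ) → Ω → ℝ) (Z : Ω → ℝ) : Prop where
  admissible : Admissible 𝓕 T μ φ
  ae_le : ∀ τ, MemT0 𝓕 T τ → φ τ ≤ᵐ[μ] Z
  integrable_bound : Integrable Z μ

variable {μ : Measure Ω} {𝓕 : Filtration ℝ m0} {T : ℝ} {S τ σ θ : Ω → ℝ}

namespace IsConsistent

variable {ψ : (Ω → ℝ) → Ω → ℝ}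

lemma ae_eq (hψ : IsConsistent 𝓕 T μ ψ) (hτ : MemT0 𝓕 T τ) (hσ : MemT0 𝓕 T σ)
    (h : τ =ᵐ[μ] σ) : ψ τ =ᵐ[μ] ψ σ := by
  filter_upwards [hψ τ σ hτ hσ, h] with ω h₁ h₂ using h₁ h₂

lemma piecewise_ae_eq (hψ : IsConsistent 𝓕 T μ ψ) {A : Set Ω} [DecidablePred (· ∈ A)]
    (hτ : MemT0 𝓕 T τ) (hσ : MemT0 𝓕 T σ) (hτσ : MemT0 𝓕 T (A.piecewise τ σ)) :
    ψ (A.piecewise τ σ) =ᵐ[μ] A.piecewise (ψ τ) (ψ σ) := by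
  filter_upwards [hψ _ _ hτσ hτ, hψ _ _ hτσ hσ] with ω h₁ h₂
  by_cases hω : ω ∈ A
  · simpa [hω] using h₁
  · simpa [hω] using h₂

lemma condExp_ae_eq_on (hψ : IsConsistent 𝓕 T μ ψ)
    (hint : ∀ τ, MemT0 𝓕 T τ → Integrable (ψ τ) μ) {m : MeasurableSpace Ω} {A : Set Ω}
    (hτ : MemT0 𝓕 T τ) (hσ : MemT0 𝓕 T σ) (hA : MeasurableSet[m] A)
    (h : ∀ᵐ ω ∂μ, ω ∈ A → τ ω = σ ω) : ∀ᵐ ω ∂μ, ω ∈ A → μ[ψ τ|m] ω = μ[ψ σ|m] ω :=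
  condExp_ae_eq_on_of_ae_eq_on (hint τ hτ) (hint σ hσ) hA <| by
    filter_upwards [h, hψ τ σ hτ hσ] with ω h₁ h₂ hω using h₂ (h₁ hω)

lemma tendsto_setIntegral_of_piecewise
    (hψ : IsConsistent 𝓕 T μ ψ) (hint : ∀ τ, MemT0 𝓕 T τ → Integrable (ψ τ) μ) {A : Set Ω}
    [DecidablePred (· ∈ A)] (hA : MeasurableSet A) {θn : ℕ → Ω → ℝ}
    (hθn : ∀ n, MemT0 𝓕 T (θn n)) (hθ : MemT0 𝓕 T θ)
    (hσ : ∀ n, MemT0 𝓕 T (A.piecewise (θn n) θ))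
    (h : Tendsto (fun n => ∫ ω, ψ (A.piecewise (θn n) θ) ω ∂μ) atTop (𝓝 (∫ ω, ψ θ ω ∂μ))) :
    Tendsto (fun n => ∫ ω in A, ψ (θn n) ω ∂μ) atTop (𝓝 (∫ ω in A, ψ θ ω ∂μ)) := by
  have hsplit : ∀ n, ∫ ω, ψ (A.piecewise (θn n) θ) ω ∂μ =
      ∫ ω in A, ψ (θn n) ω ∂μ + ∫ ω in Aᶜ, ψ θ ω ∂μ := fun n => by
    rw [integral_congr_ae (hψ.piecewise_ae_eq (hθn n) hθ (hσ n)),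
      integral_piecewise hA (hint _ (hθn n)).integrableOn (hint _ hθ).integrableOn]
  rw [← integral_add_compl hA (hint θ hθ)] at h
  simp_rw [hsplit] at h
  simpa using h.sub_const (∫ ω in Aᶜ, ψ θ ω ∂μ)

end IsConsistent

namespace IsDominatedReward

variable {φ : (Ω → ℝ) → Ω → ℝ} {Z : Ω → ℝ}

lemma nonneg (hφ : IsDominatedReward 𝓕 T μ φ Z) (hτ : MemT0 𝓕 T τ) (ω : Ω) : 0 ≤ φ τ ω :=
  (hφ.admissible.1 τ hτ).2 ω

lemma isConsistent (hφ : IsDominatedReward 𝓕 T μ φ Z) : IsConsistent 𝓕 T μ φ :=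
  hφ.admissible.2

lemma stronglyMeasurable (hφ : IsDominatedReward 𝓕 T μ φ Z) (hτ : MemT0 𝓕 T τ) :
    StronglyMeasurable[hτ.1.measurableSpace] (φ τ) :=
  (hφ.admissible.1 τ hτ).1.stronglyMeasurable

lemma integrable (hφ : IsDominatedReward 𝓕 T μ φ Z) (hτ : MemT0 𝓕 T τ) : Integrable (φ τ) μ :=
  hφ.integrable_bound.mono'
    ((hφ.stronglyMeasurable hτ).mono hτ.1.measurableSpace_le).aestronglyMeasurable <| by
      filter_upwards [hφ.ae_le τ hτ] with ω h
      rwa [Real.norm_eq_abs, abs_of_nonneg (hφ.nonneg hτ ω)]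

lemma condExp_le (hφ : IsDominatedReward 𝓕 T μ φ Z) {m : MeasurableSpace Ω}
    (hτ : MemT0 𝓕 T τ) : μ[φ τ|m] ≤ᵐ[μ] μ[Z|m] :=
  condExp_mono (hφ.integrable hτ) hφ.integrable_bound (hφ.ae_le τ hτ)

lemma condExp_eq [IsFiniteMeasure μ] (hφ : IsDominatedReward 𝓕 T μ φ Z) (hτ : MemT0 𝓕 T τ) :
    μ[φ τ|hτ.1.measurableSpace] = φ τ :=
  condExp_of_stronglyMeasurable hτ.1.measurableSpace_le (hφ.stronglyMeasurable hτ)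
    (hφ.integrable hτ)

/-- Paste `θ₁ ∨ S` and `θ₂ ∨ S` along the `F_S`-event where `E[φ θ₁ | F_S]` is the larger. -/
lemma condExp_directed (hφ : IsDominatedReward 𝓕 T μ φ Z) (hS : MemT0 𝓕 T S) (θ₁ θ₂ : Ω → ℝ)
    (h₁ : MemT0 𝓕 T θ₁ ∧ S ≤ᵐ[μ] θ₁) (h₂ : MemT0 𝓕 T θ₂ ∧ S ≤ᵐ[μ] θ₂) :
    ∃ θ₃, (MemT0 𝓕 T θ₃ ∧ S ≤ᵐ[μ] θ₃) ∧
      μ[φ θ₁|hS.1.measurableSpace] ≤ᵐ[μ] μ[φ θ₃|hS.1.measurableSpace] ∧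
      μ[φ θ₂|hS.1.measurableSpace] ≤ᵐ[μ] μ[φ θ₃|hS.1.measurableSpace] := by
  classical
  set A := {ω | μ[φ θ₂|hS.1.measurableSpace] ω ≤ μ[φ θ₁|hS.1.measurableSpace] ω}
  have hA : MeasurableSet[hS.1.measurableSpace] A :=
    measurableSet_le stronglyMeasurable_condExp.measurable stronglyMeasurable_condExp.measurable
  set θ₃ := A.piecewise (fun ω => max (θ₁ ω) (S ω)) (fun ω => max (θ₂ ω) (S ω))
  have hθ₃ : MemT0 𝓕 T θ₃ := hS.piecewise (h₁.1.max hS) (h₂.1.max hS) hA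
    (fun _ => le_max_right _ _) (fun _ => le_max_right _ _)
  have hSθ₃ : ∀ ω, S ω ≤ θ₃ ω := fun ω => by by_cases hω : ω ∈ A <;> simp [θ₃, hω]
  have e₁ := hφ.isConsistent.condExp_ae_eq_on (fun _ => hφ.integrable) hθ₃ h₁.1 hA <| by
    filter_upwards [h₁.2] with ω h hω
    simp [θ₃, hω, h]
  have e₂ := hφ.isConsistent.condExp_ae_eq_on (fun _ => hφ.integrable) hθ₃ h₂.1 hA.compl <| by
    filter_upwards [h₂.2] with ω h hω
    simp [θ₃, Set.notMem_of_mem_compl hω, h]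
  refine ⟨θ₃, ⟨hθ₃, ae_of_all _ hSθ₃⟩, ?_, ?_⟩ <;> filter_upwards [e₁, e₂] with ω e₁ e₂
  all_goals by_cases hω : ω ∈ A
  · exact (e₁ hω).ge
  · exact (e₂ hω).symm ▸ (not_le.1 hω).le
  · exact (e₁ hω).symm ▸ hω
  · exact (e₂ hω).ge

end IsDominatedReward

namespace IsValueFamily

variable {φ V : (Ω → ℝ) → Ω → ℝ} {Z : Ω → ℝ}

lemma exists_seq (hV : IsValueFamily 𝓕 T μ φ V) (hφ : IsDominatedReward 𝓕 T μ φ Z)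
    (hS : MemT0 𝓕 T S) :
    ∃ θ : ℕ → Ω → ℝ, (∀ n, MemT0 𝓕 T (θ n) ∧ S ≤ᵐ[μ] θ n) ∧
      (∀ n, μ[φ (θ n)|hS.1.measurableSpace] ≤ᵐ[μ] μ[φ (θ (n + 1))|hS.1.measurableSpace]) ∧
      V S =ᵐ[μ] fun ω => ⨆ n, μ[φ (θ n)|hS.1.measurableSpace] ω := by
  obtain ⟨θ, hθ, hmono, hsup⟩ := exists_seq_isEssSupFam_of_directed
    (fun _ _ => integrable_condExp) (fun θ hθ => hφ.condExp_le hθ.1) integrable_condExp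
    ⟨S, hS, ae_of_all _ fun _ => le_rfl⟩ (hφ.condExp_directed hS)
  exact ⟨θ, hθ, hmono, (hV S hS).ae_eq hsup⟩

lemma integrable (hV : IsValueFamily 𝓕 T μ φ V) (hφ : IsDominatedReward 𝓕 T μ φ Z)
    (hS : MemT0 𝓕 T S) : Integrable (V S) μ := by
  obtain ⟨θ, hθ, hmono, hVS⟩ := hV.exists_seq hφ hS
  exact (integrable_iSup_of_ae_monotone (fun _ => integrable_condExp) hmono
    (fun n => hφ.condExp_le (hθ n).1) integrable_condExp).congr hVS.symm

variable [IsFiniteMeasure μ]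

lemma condExp_ae_eq (hV : IsValueFamily 𝓕 T μ φ V)
    (hφ : IsDominatedReward 𝓕 T μ φ Z) (hS : MemT0 𝓕 T S) :
    μ[V S|hS.1.measurableSpace] =ᵐ[μ] V S := by
  obtain ⟨θ, -, -, hVS⟩ := hV.exists_seq hφ hS
  have hm : StronglyMeasurable[hS.1.measurableSpace]
      (fun ω => ⨆ n, μ[φ (θ n)|hS.1.measurableSpace] ω) :=
    (Measurable.iSup fun n => stronglyMeasurable_condExp.measurable).stronglyMeasurable
  refine (condExp_congr_ae hVS).trans ?_
  rw [condExp_of_stronglyMeasurable hS.1.measurableSpace_le hm ((hV.integrable hφ hS).congr hVS)]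
  exact hVS.symm

lemma exists_tendsto_setIntegral (hV : IsValueFamily 𝓕 T μ φ V)
    (hφ : IsDominatedReward 𝓕 T μ φ Z) (hS : MemT0 𝓕 T S) :
    ∃ θ : ℕ → Ω → ℝ, (∀ n, MemT0 𝓕 T (θ n) ∧ S ≤ᵐ[μ] θ n) ∧
      ∀ A, MeasurableSet[hS.1.measurableSpace] A →
        Tendsto (fun n => ∫ ω in A, φ (θ n) ω ∂μ) atTop (𝓝 (∫ ω in A, V S ω ∂μ)) := by
  obtain ⟨θ, hθ, hmono, hVS⟩ := hV.exists_seq hφ hS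
  refine ⟨θ, hθ, fun A hA => ?_⟩
  rw [integral_congr_ae (ae_restrict_of_ae hVS)]
  have := tendsto_integral_iSup_of_ae_monotone (μ := μ.restrict A)
    (fun _ => integrable_condExp.restrict) (fun n => ae_restrict_of_ae (hmono n))
    (fun n => ae_restrict_of_ae (hφ.condExp_le (hθ n).1)) integrable_condExp.restrict
  simpa only [setIntegral_condExp hS.1.measurableSpace_le (hφ.integrable (hθ _).1) hA] using this

lemma setIntegral_reward_le (hV : IsValueFamily 𝓕 T μ φ V)
    (hφ : IsDominatedReward 𝓕 T μ φ Z) (hS : MemT0 𝓕 T S) (hθ : MemT0 𝓕 T θ)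
    (hSθ : S ≤ᵐ[μ] θ) {A : Set Ω}
    (hA : MeasurableSet[hS.1.measurableSpace] A) :
    ∫ ω in A, φ θ ω ∂μ ≤ ∫ ω in A, V S ω ∂μ := by
  rw [← setIntegral_condExp hS.1.measurableSpace_le (hφ.integrable hθ) hA]
  exact setIntegral_mono_ae integrable_condExp.integrableOn (hV.integrable hφ hS).integrableOn
    ((hV S hS).1 θ ⟨hθ, hSθ⟩)

lemma integral_reward_le (hV : IsValueFamily 𝓕 T μ φ V)
    (hφ : IsDominatedReward 𝓕 T μ φ Z) (hS : MemT0 𝓕 T S) (hθ : MemT0 𝓕 T θ) (hSθ : S ≤ᵐ[μ] θ) :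
    ∫ ω, φ θ ω ∂μ ≤ ∫ ω, V S ω ∂μ := by
  simpa using hV.setIntegral_reward_le hφ hS hθ hSθ MeasurableSet.univ

lemma reward_le (hV : IsValueFamily 𝓕 T μ φ V)
    (hφ : IsDominatedReward 𝓕 T μ φ Z) (hS : MemT0 𝓕 T S) : φ S ≤ᵐ[μ] V S :=
  hφ.condExp_eq hS ▸ (hV S hS).1 S ⟨hS, ae_of_all _ fun _ => le_rfl⟩

lemma nonneg (hV : IsValueFamily 𝓕 T μ φ V)
    (hφ : IsDominatedReward 𝓕 T μ φ Z) (hS : MemT0 𝓕 T S) : 0 ≤ᵐ[μ] V S := by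
  filter_upwards [hV.reward_le hφ hS] with ω h using (hφ.nonneg hS ω).trans h


/-- On `A = {τ = σ} ∈ F_τ`, a time `θ ≥ τ` can be continued by `σ ∨ τ` off `A`; the resulting
time is `≥ σ`, and `F_τ`, `F_σ` agree on `A`. -/
lemma ae_le_of_eq (hV : IsValueFamily 𝓕 T μ φ V) (hφ : IsDominatedReward 𝓕 T μ φ Z)
    (hτ : MemT0 𝓕 T τ) (hσ : MemT0 𝓕 T σ) : ∀ᵐ ω ∂μ, τ ω = σ ω → V τ ω ≤ V σ ω := by
  classical
  set A := {ω | τ ω = σ ω}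
  have hA : MeasurableSet[hτ.1.measurableSpace] A := by
    simpa only [WithTop.coe_inj] using hτ.1.measurableSet_eq_stopping_time hσ.1
  have hle : V τ ≤ᵐ[μ] A.piecewise (V σ) (V τ) := by
    refine (hV τ hτ).2 _ fun θ ⟨hθ, hτθ⟩ => ?_
    set θ' := A.piecewise (fun ω => max (θ ω) (τ ω)) (fun ω => max (σ ω) (τ ω))
    have hθ' : MemT0 𝓕 T θ' := hτ.piecewise (hθ.max hτ) (hσ.max hτ) hA
      (fun _ => le_max_right _ _) (fun _ => le_max_right _ _)
    have hσθ' : ∀ ω, σ ω ≤ θ' ω := fun ω => by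
      by_cases hω : ω ∈ A
      · simp [θ', hω, show τ ω = σ ω from hω]
      · simp [θ', hω]
    have e₁ := hφ.isConsistent.condExp_ae_eq_on (fun _ => hφ.integrable) hθ hθ' hA <| by
      filter_upwards [hτθ] with ω h hω
      simp [θ', hω, h]
    have e₂ := condExp_ae_eq_on_eq_of_isStoppingTime (μ := μ) hτ.1 hσ.1 (φ θ')
    filter_upwards [e₁, e₂, (hV σ hσ).1 θ' ⟨hθ', ae_of_all _ hσθ'⟩, (hV τ hτ).1 θ ⟨hθ, hτθ⟩]
      with ω e₁ e₂ hθ'σ hθτ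
    by_cases hω : ω ∈ A
    · simpa [hω, e₁ hω, e₂ (congrArg _ hω)] using hθ'σ
    · simpa [hω] using hθτ
  filter_upwards [hle] with ω h hω
  simpa [A, hω] using h

lemma isConsistent (hV : IsValueFamily 𝓕 T μ φ V) (hφ : IsDominatedReward 𝓕 T μ φ Z) :
    IsConsistent 𝓕 T μ V := fun τ σ hτ hσ => by
  filter_upwards [hV.ae_le_of_eq hφ hτ hσ, hV.ae_le_of_eq hφ hσ hτ] with ω h₁ h₂ h
  exact (h₁ h).antisymm (h₂ h.symm)

lemma condExp_le_of_le (hV : IsValueFamily 𝓕 T μ φ V) (hφ : IsDominatedReward 𝓕 T μ φ Z)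
    (hS : MemT0 𝓕 T S) (hτ : MemT0 𝓕 T τ) (hSτ : ∀ ω, S ω ≤ τ ω) :
    μ[V τ|hS.1.measurableSpace] ≤ᵐ[μ] V S := by
  obtain ⟨θ, hθ, hlim⟩ := hV.exists_tendsto_setIntegral hφ hτ
  have hmono := hS.1.measurableSpace_mono hτ.1 fun ω => WithTop.coe_le_coe.2 (hSτ ω)
  refine (condExp_mono_of_forall_setIntegral_le hS.1.measurableSpace_le
    (hV.integrable hφ hτ) (hV.integrable hφ hS) fun A hA => ?_).trans
    (hV.condExp_ae_eq hφ hS).le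
  exact le_of_tendsto' (hlim A (hmono A hA)) fun n => hV.setIntegral_reward_le hφ hS (hθ n).1
    (EventuallyLE.trans (ae_of_all _ hSτ) (hθ n).2) hA

lemma condExp_le (hV : IsValueFamily 𝓕 T μ φ V) (hφ : IsDominatedReward 𝓕 T μ φ Z)
    (hS : MemT0 𝓕 T S) (hτ : MemT0 𝓕 T τ) (hSτ : S ≤ᵐ[μ] τ) :
    μ[V τ|hS.1.measurableSpace] ≤ᵐ[μ] V S :=
  (condExp_congr_ae ((hV.isConsistent hφ).ae_eq hτ (hτ.max hS)
    (max_ae_eq_of_ae_le hSτ).symm)).trans_le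
    (hV.condExp_le_of_le hφ hS (hτ.max hS) fun _ => le_max_right _ _)

lemma integral_anti (hV : IsValueFamily 𝓕 T μ φ V) (hφ : IsDominatedReward 𝓕 T μ φ Z)
    (hS : MemT0 𝓕 T S) (hτ : MemT0 𝓕 T τ) (hSτ : S ≤ᵐ[μ] τ) :
    ∫ ω, V τ ω ∂μ ≤ ∫ ω, V S ω ∂μ := by
  rw [← integral_condExp hS.1.measurableSpace_le]
  exact integral_mono_ae integrable_condExp (hV.integrable hφ hS) (hV.condExp_le hφ hS hτ hSτ)

lemma condExp_anti (hV : IsValueFamily 𝓕 T μ φ V) (hφ : IsDominatedReward 𝓕 T μ φ Z)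
    (hS : MemT0 𝓕 T S) (hτ : MemT0 𝓕 T τ) (hσ : MemT0 𝓕 T σ) (hSτ : S ≤ᵐ[μ] τ)
    (hτσ : τ ≤ᵐ[μ] σ) :
    μ[V σ|hS.1.measurableSpace] ≤ᵐ[μ] μ[V τ|hS.1.measurableSpace] := by
  have hτ' := hτ.max hS
  have hττ' : τ =ᵐ[μ] fun ω => max (τ ω) (S ω) := (max_ae_eq_of_ae_le hSτ).symm
  have hmono := hS.1.measurableSpace_mono hτ'.1 fun ω => WithTop.coe_le_coe.2 (le_max_right _ _)
  calc μ[V σ|hS.1.measurableSpace]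
      =ᵐ[μ] μ[μ[V σ|hτ'.1.measurableSpace]|hS.1.measurableSpace] :=
        (condExp_condExp_of_le hmono hτ'.1.measurableSpace_le).symm
    _ ≤ᵐ[μ] μ[V (fun ω => max (τ ω) (S ω))|hS.1.measurableSpace] :=
        condExp_mono integrable_condExp (hV.integrable hφ hτ')
          (hV.condExp_le hφ hτ' hσ (hττ'.symm.le.trans hτσ))
    _ =ᵐ[μ] μ[V τ|hS.1.measurableSpace] :=
        condExp_congr_ae ((hV.isConsistent hφ).ae_eq hτ' hτ hττ'.symm)

lemma ae_eq_at_T (hV : IsValueFamily 𝓕 T μ φ V) (hφ : IsDominatedReward 𝓕 T μ φ Z)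
    (hT : MemT0 𝓕 T (fun _ => T)) : V (fun _ => T) =ᵐ[μ] φ (fun _ => T) := by
  refine EventuallyLE.antisymm ((hV _ hT).2 _ fun θ ⟨hθ, hTθ⟩ => ?_) (hV.reward_le hφ hT)
  have hθT : θ =ᵐ[μ] fun _ => T := by
    filter_upwards [hTθ] with ω h using (hθ.le_T ω).antisymm h
  rw [← hφ.condExp_eq hT]
  exact (condExp_congr_ae (hφ.isConsistent.ae_eq hθ hT hθT)).le

lemma tendsto_integral_of_downAS (hV : IsValueFamily 𝓕 T μ φ V)
    (hφ : IsDominatedReward 𝓕 T μ φ Z) (hφrc : RCE 𝓕 T μ φ) (hθ : MemT0 𝓕 T θ)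
    {θn : ℕ → Ω → ℝ} (hθn : ∀ n, MemT0 𝓕 T (θn n)) (hdown : DownAS μ θn θ) :
    Tendsto (fun n => ∫ ω, V (θn n) ω ∂μ) atTop (𝓝 (∫ ω, V θ ω ∂μ)) := by
  have hθle : ∀ n, θ ≤ᵐ[μ] θn n := fun n => by
    filter_upwards [hdown] with ω ⟨hanti, hlim⟩
    exact (antitone_nat_of_succ_le hanti).le_of_tendsto hlim n
  obtain ⟨η, hη, hlim⟩ := hV.exists_tendsto_setIntegral hφ hθ
  refine tendsto_atTop_isLUB (monotone_nat_of_le_succ fun n => hV.integral_anti hφ (hθn _)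
    (hθn n) (by filter_upwards [hdown] with ω h using h.1 n)) ⟨?_, fun b hb => ?_⟩
  · rintro _ ⟨n, rfl⟩
    exact hV.integral_anti hφ hθ (hθn n) (hθle n)
  have hηn : ∀ k n, MemT0 𝓕 T (fun ω => max (η k ω) (θn n ω)) :=
    fun k n => (hη k).1.max (hθn n)
  have hdown_k : ∀ k, DownAS μ (fun n ω => max (η k ω) (θn n ω)) (η k) := fun k => by
    filter_upwards [hdown, (hη k).2] with ω ⟨hanti, hlim⟩ hθη
    exact ⟨fun n => max_le_max le_rfl (hanti n),
      by simpa [max_eq_left hθη] using (tendsto_const_nhds (x := η k ω)).max hlim⟩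
  have hφb : ∀ k, ∫ ω, φ (η k) ω ∂μ ≤ b := fun k =>
    le_of_tendsto' (hφrc (η k) (hη k).1 _ (hηn k) (hdown_k k)) fun n =>
      (hV.integral_reward_le hφ (hθn n) (hηn k n) (ae_of_all _ fun _ => le_max_right _ _)).trans
        (hb ⟨n, rfl⟩)
  simpa using le_of_tendsto' (hlim Set.univ MeasurableSet.univ) (by simpa using hφb)

end IsValueFamily

end ValueFamily

section Penalization

variable {m0 : MeasurableSpace Ω}

def IsPenalized (𝓕 : Filtration ℝ m0) (T : ℝ) (μ : Measure Ω) (φ V : (Ω → ℝ) → Ω → ℝ)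
    (lam : ℝ) (S θ : Ω → ℝ) : Prop :=
  MemT0 𝓕 T θ ∧ S ≤ᵐ[μ] θ ∧ ∀ᵐ ω ∂μ, lam * V θ ω ≤ φ θ ω

/-- `θ = θ^λ(S)` in the paper's notation. -/
def IsPenalizedTime (𝓕 : Filtration ℝ m0) (T : ℝ) (μ : Measure Ω) (φ V : (Ω → ℝ) → Ω → ℝ)
    (lam : ℝ) (S θ : Ω → ℝ) : Prop :=
  IsPenalized 𝓕 T μ φ V lam S θ ∧ ∀ η, IsPenalized 𝓕 T μ φ V lam S η → θ ≤ᵐ[μ] η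

variable {μ : Measure Ω} [IsFiniteMeasure μ] {𝓕 : Filtration ℝ m0} {T : ℝ}
  {φ V : (Ω → ℝ) → Ω → ℝ} {Z : Ω → ℝ} {lam : ℝ} {S τ θ θ' : Ω → ℝ}

namespace IsValueFamily

lemma isPenalized_anti (hV : IsValueFamily 𝓕 T μ φ V) (hφ : IsDominatedReward 𝓕 T μ φ Z)
    {lam' : ℝ} (hlam : lam ≤ lam') (h : IsPenalized 𝓕 T μ φ V lam' S θ) :
    IsPenalized 𝓕 T μ φ V lam S θ := by
  refine ⟨h.1, h.2.1, ?_⟩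
  filter_upwards [h.2.2, hV.nonneg hφ h.1] with ω h hV using
    (mul_le_mul_of_nonneg_right hlam hV).trans h

lemma isPenalized_of_ae_eq (hV : IsValueFamily 𝓕 T μ φ V) (hφ : IsDominatedReward 𝓕 T μ φ Z)
    (hlam : lam ≤ 1) (hθ : MemT0 𝓕 T θ) (hSθ : S ≤ᵐ[μ] θ) (hVθ : V θ =ᵐ[μ] φ θ) :
    IsPenalized 𝓕 T μ φ V lam S θ :=
  hV.isPenalized_anti hφ hlam ⟨hθ, hSθ, by filter_upwards [hVθ] with ω h using by simp [h]⟩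

lemma isPenalized_min (hV : IsValueFamily 𝓕 T μ φ V) (hφ : IsDominatedReward 𝓕 T μ φ Z)
    (h : IsPenalized 𝓕 T μ φ V lam S θ) (h' : IsPenalized 𝓕 T μ φ V lam S θ') :
    IsPenalized 𝓕 T μ φ V lam S (fun ω => min (θ ω) (θ' ω)) := by
  have hmin := h.1.min h'.1
  refine ⟨hmin, by filter_upwards [h.2.1, h'.2.1] with ω h h' using le_min h h', ?_⟩
  filter_upwards [hV.isConsistent hφ _ _ hmin h.1, hV.isConsistent hφ _ _ hmin h'.1,
    hφ.isConsistent _ _ hmin h.1, hφ.isConsistent _ _ hmin h'.1, h.2.2, h'.2.2]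
    with ω hV₁ hV₂ hφ₁ hφ₂ h h'
  rcases le_total (θ ω) (θ' ω) with hle | hle
  · rw [hV₁ (min_eq_left hle), hφ₁ (min_eq_left hle)]
    exact h
  · rw [hV₂ (min_eq_right hle), hφ₂ (min_eq_right hle)]
    exact h'

lemma isPenalizedTime_congr (hV : IsValueFamily 𝓕 T μ φ V) (hφ : IsDominatedReward 𝓕 T μ φ Z)
    (h : IsPenalizedTime 𝓕 T μ φ V lam S θ) (hθ' : MemT0 𝓕 T θ') (hθθ' : θ =ᵐ[μ] θ') :
    IsPenalizedTime 𝓕 T μ φ V lam S θ' := by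
  refine ⟨⟨hθ', h.1.2.1.trans hθθ'.le, ?_⟩, fun η hη => hθθ'.symm.le.trans (h.2 η hη)⟩
  filter_upwards [h.1.2.2, (hV.isConsistent hφ).ae_eq h.1.1 hθ' hθθ',
    hφ.isConsistent.ae_eq h.1.1 hθ' hθθ'] with ω h hV hφ
  rwa [← hV, ← hφ]

/-- Right continuity in expectation of `φ` and of `E[v]` lets the penalized inequality pass to
the limit of a decreasing sequence: test it on `A ∈ F_θ` along `θn` pasted with `θ` off `A`. -/
lemma ae_mul_le_of_antitone (hV : IsValueFamily 𝓕 T μ φ V) (hφ : IsDominatedReward 𝓕 T μ φ Z)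
    (hφrc : RCE 𝓕 T μ φ) {θn : ℕ → Ω → ℝ} (hθn : ∀ n, MemT0 𝓕 T (θn n))
    (hpen : ∀ n, ∀ᵐ ω ∂μ, lam * V (θn n) ω ≤ φ (θn n) ω) (hanti : Antitone θn)
    (hθ : MemT0 𝓕 T θ) (hlim : ∀ ω, Tendsto (fun n => θn n ω) atTop (𝓝 (θ ω))) :
    ∀ᵐ ω ∂μ, lam * V θ ω ≤ φ θ ω := by
  classical
  have hθle : ∀ n ω, θ ω ≤ θn n ω := fun n ω =>
    (antitone_nat_of_succ_le fun k => hanti k.le_succ ω).le_of_tendsto (hlim ω) n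
  have hVθ := hV.integrable hφ hθ
  suffices μ[lam • V θ|hθ.1.measurableSpace] ≤ᵐ[μ] μ[φ θ|hθ.1.measurableSpace] by
    filter_upwards [this, condExp_smul (μ := μ) (m := hθ.1.measurableSpace) lam (V θ),
      hV.condExp_ae_eq hφ hθ] with ω h hsmul hVω
    rw [hsmul, hφ.condExp_eq hθ] at h
    simpa [hVω] using h
  refine condExp_mono_of_forall_setIntegral_le hθ.1.measurableSpace_le (hVθ.smul lam)
    (hφ.integrable hθ) fun A hA => ?_
  have hσ : ∀ n, MemT0 𝓕 T (A.piecewise (θn n) θ) := fun n =>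
    hθ.piecewise (hθn n) hθ hA (hθle n) fun _ => le_rfl
  have hdown : DownAS μ (fun n => A.piecewise (θn n) θ) θ := ae_of_all _ fun ω => by
    by_cases hω : ω ∈ A
    · simpa [hω] using ⟨fun n => hanti n.le_succ ω, hlim ω⟩
    · simp [hω]
  have hA' := hθ.1.measurableSpace_le A hA
  have hφA := hφ.isConsistent.tendsto_setIntegral_of_piecewise (fun _ => hφ.integrable) hA'
    hθn hθ hσ (hφrc θ hθ _ hσ hdown)
  have hVA := (hV.isConsistent hφ).tendsto_setIntegral_of_piecewise
    (fun _ => hV.integrable hφ) hA' hθn hθ hσ (hV.tendsto_integral_of_downAS hφ hφrc hθ hσ hdown)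
  simp only [Pi.smul_apply, smul_eq_mul, integral_const_mul]
  refine le_of_tendsto_of_tendsto' (hVA.const_mul lam) hφA fun n => ?_
  rw [← integral_const_mul]
  exact setIntegral_mono_ae ((hV.integrable hφ (hθn n)).const_mul lam).integrableOn
    (hφ.integrable (hθn n)).integrableOn (hpen n)

theorem exists_isPenalizedTime (hV : IsValueFamily 𝓕 T μ φ V)
    (hφ : IsDominatedReward 𝓕 T μ φ Z) (hFright : ∀ t : ℝ, 𝓕 t = ⨅ s ∈ Set.Ioi t, 𝓕 s)
    (hφrc : RCE 𝓕 T μ φ) (hlam : lam ≤ 1) (hS : MemT0 𝓕 T S) :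
    ∃ θ, IsPenalizedTime 𝓕 T μ φ V lam S θ ∧ ∀ ω, S ω ≤ θ ω := by
  have hT : MemT0 𝓕 T (fun _ => T) :=
    ⟨isStoppingTime_const 𝓕 T, fun ω => ⟨(hS.nonneg ω).trans (hS.le_T ω), le_rfl⟩⟩
  obtain ⟨θn, hθn, hanti, hinf⟩ := exists_antitone_seq_iInf_ae_le (μ := μ)
    (Q := IsPenalized 𝓕 T μ φ V lam S) (fun _ h => h.1)
    ⟨_, hV.isPenalized_of_ae_eq hφ hlam hT (ae_of_all _ hS.le_T) (hV.ae_eq_at_T hφ hT)⟩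
    fun _ _ => hV.isPenalized_min hφ
  have hθ : MemT0 𝓕 T (fun ω => ⨅ n, θn n ω) := MemT0.iInf hFright fun n => (hθn n).1
  have hlim : ∀ ω, Tendsto (fun n => θn n ω) atTop (𝓝 (⨅ n, θn n ω)) := fun ω =>
    tendsto_atTop_ciInf (fun _ _ h => hanti h ω) ⟨0, by rintro _ ⟨n, rfl⟩; exact (hθn n).1.nonneg ω⟩
  have hSθ : S ≤ᵐ[μ] fun ω => ⨅ n, θn n ω := by
    filter_upwards [ae_all_iff.2 fun n => (hθn n).2.1] with ω h using le_ciInf h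
  have hpen : IsPenalizedTime 𝓕 T μ φ V lam S (fun ω => ⨅ n, θn n ω) :=
    ⟨⟨hθ, hSθ, hV.ae_mul_le_of_antitone hφ hφrc (fun n => (hθn n).1) (fun n => (hθn n).2.2) hanti
      hθ hlim⟩, hinf⟩
  exact ⟨_, hV.isPenalizedTime_congr hφ hpen (hθ.max hS) (max_ae_eq_of_ae_le hSθ).symm,
    fun _ => le_max_right _ _⟩

/-- Pasting `τ` on `C = {λ v(τ) ≤ φ(τ)} ∈ F_τ` with `θ^λ(τ)` off `C` gives a penalized time, so by
minimality `θ^λ(τ) = τ` a.s. on `C`. -/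
lemma reward_le_of_isPenalizedTime (hV : IsValueFamily 𝓕 T μ φ V)
    (hφ : IsDominatedReward 𝓕 T μ φ Z) (hlam : lam ≤ 1) (hτ : MemT0 𝓕 T τ)
    (hθ : IsPenalizedTime 𝓕 T μ φ V lam τ θ) (hτθ : ∀ ω, τ ω ≤ θ ω) :
    φ τ ≤ᵐ[μ] lam • V τ + (1 - lam) • μ[V θ|hτ.1.measurableSpace] := by
  classical
  have hθ' := hθ.1.1
  set B := {ω | θ ω ≤ τ ω}
  have hB : MeasurableSet[hτ.1.measurableSpace] B := by
    simpa only [WithTop.coe_le_coe] using hθ'.1.measurableSet_stopping_time_le hτ.1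
  set C := {ω | lam * μ[V τ|hτ.1.measurableSpace] ω ≤ φ τ ω}
  have hC : MeasurableSet[hτ.1.measurableSpace] C :=
    measurableSet_le (stronglyMeasurable_condExp.measurable.const_mul lam)
      (hφ.stronglyMeasurable hτ).measurable
  have hν : MemT0 𝓕 T (C.piecewise τ θ) := hτ.piecewise hτ hθ' hC (fun _ => le_rfl) hτθ
  have hνpen : IsPenalized 𝓕 T μ φ V lam τ (C.piecewise τ θ) := by
    refine ⟨hν, ae_of_all _ fun ω => ?_, ?_⟩
    · by_cases hω : ω ∈ C <;> simp [hω, hτθ ω]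
    filter_upwards [(hV.isConsistent hφ).piecewise_ae_eq hτ hθ' hν,
      hφ.isConsistent.piecewise_ae_eq hτ hθ' hν, hV.condExp_ae_eq hφ hτ, hθ.1.2.2]
      with ω hVν hφν hVτ hθω
    by_cases hω : ω ∈ C
    · rw [hVν, hφν, Set.piecewise_eq_of_mem _ _ _ hω, Set.piecewise_eq_of_mem _ _ _ hω, ← hVτ]
      exact hω
    · simpa [hVν, hφν, hω] using hθω
  have hCB : ∀ᵐ ω ∂μ, ω ∈ C → ω ∈ B := by
    filter_upwards [hθ.2 _ hνpen] with ω h hω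
    simpa [B, hω] using h
  have hBeq := (hV.isConsistent hφ).condExp_ae_eq_on (m := hτ.1.measurableSpace)
    (fun _ => hV.integrable hφ) hθ' hτ hB (ae_of_all _ fun ω hω => le_antisymm hω (hτθ ω))
  filter_upwards [hCB, hBeq, condExp_nonneg (m := hτ.1.measurableSpace) (hV.nonneg hφ hθ'),
    hV.condExp_ae_eq hφ hτ, hV.reward_le hφ hτ] with ω hCB hBeq hnn hVτ hφV
  simp only [Pi.add_apply, Pi.smul_apply, smul_eq_mul]
  by_cases hωB : ω ∈ B
  · rw [hBeq hωB, hVτ]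
    linarith
  · have hlt : φ τ ω < lam * V τ ω := by simpa [C, hVτ] using mt hCB hωB
    nlinarith [mul_nonneg (sub_nonneg.2 hlam) (show (0 : ℝ) ≤ _ from hnn)]

lemma condExp_reward_le (hV : IsValueFamily 𝓕 T μ φ V) (hφ : IsDominatedReward 𝓕 T μ φ Z)
    (hFright : ∀ t : ℝ, 𝓕 t = ⨅ s ∈ Set.Ioi t, 𝓕 s) (hφrc : RCE 𝓕 T μ φ) (hlam₀ : 0 ≤ lam)
    (hlam₁ : lam ≤ 1) (hS : MemT0 𝓕 T S) (hθ : IsPenalizedTime 𝓕 T μ φ V lam S θ)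
    (hτ : MemT0 𝓕 T τ) (hSτ : S ≤ᵐ[μ] τ) :
    μ[φ τ|hS.1.measurableSpace] ≤ᵐ[μ]
      lam • V S + (1 - lam) • μ[V θ|hS.1.measurableSpace] := by
  have hτ' := hτ.max hS
  have hmS := hS.1.measurableSpace_mono hτ'.1 fun ω => WithTop.coe_le_coe.2 (le_max_right _ _)
  obtain ⟨ϑ, hϑ, hτϑ⟩ := hV.exists_isPenalizedTime hφ hFright hφrc hlam₁ hτ'
  have hθϑ : θ ≤ᵐ[μ] ϑ :=
    hθ.2 ϑ ⟨hϑ.1.1, ae_of_all _ fun ω => (le_max_right _ _).trans (hτϑ ω), hϑ.1.2.2⟩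
  have hVτ' := hV.integrable hφ hτ'
  filter_upwards [condExp_congr_ae (m := hS.1.measurableSpace)
      (hφ.isConsistent.ae_eq hτ hτ' (max_ae_eq_of_ae_le hSτ).symm),
    condExp_mono (m := hS.1.measurableSpace) (hφ.integrable hτ') ((hVτ'.smul lam).add
      (integrable_condExp.smul (1 - lam))) (hV.reward_le_of_isPenalizedTime hφ hlam₁ hτ' hϑ hτϑ),
    condExp_add_smul_ae_eq (m := hS.1.measurableSpace) hVτ' integrable_condExp lam (1 - lam),
    condExp_condExp_of_le (μ := μ) (f := V ϑ) hmS hτ'.1.measurableSpace_le,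
    hV.condExp_anti hφ hS hθ.1.1 hϑ.1.1 hθ.1.2.1 hθϑ,
    hV.condExp_le hφ hS hτ' (ae_of_all _ fun _ => le_max_right _ _)] with ω h₀ h₁ h₂ h₃ h₄ h₅
  simp only [Pi.add_apply, Pi.smul_apply, smul_eq_mul] at h₂ ⊢
  rw [h₂, h₃] at h₁
  rw [h₀]
  nlinarith [mul_le_mul_of_nonneg_left h₅ hlam₀, mul_le_mul_of_nonneg_left h₄ (sub_nonneg.2 hlam₁)]

lemma ae_eq_condExp_of_isPenalizedTime (hV : IsValueFamily 𝓕 T μ φ V)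
    (hφ : IsDominatedReward 𝓕 T μ φ Z) (hFright : ∀ t : ℝ, 𝓕 t = ⨅ s ∈ Set.Ioi t, 𝓕 s)
    (hφrc : RCE 𝓕 T μ φ) (hlam₀ : 0 ≤ lam) (hlam₁ : lam < 1) (hS : MemT0 𝓕 T S)
    (hθ : IsPenalizedTime 𝓕 T μ φ V lam S θ) : V S =ᵐ[μ] μ[V θ|hS.1.measurableSpace] := by
  refine EventuallyLE.antisymm ?_ (hV.condExp_le hφ hS hθ.1.1 hθ.1.2.1)
  filter_upwards [(hV S hS).2 _ fun τ hτ => hV.condExp_reward_le hφ hFright hφrc hlam₀ hlam₁.le hS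
    hθ hτ.1 hτ.2] with ω h
  simp only [Pi.add_apply, Pi.smul_apply, smul_eq_mul] at h
  nlinarith

end IsValueFamily

end Penalization

section Optimality

variable {m0 : MeasurableSpace Ω} {μ : Measure Ω} [IsFiniteMeasure μ] {𝓕 : Filtration ℝ m0}
  {T : ℝ} {φ V : (Ω → ℝ) → Ω → ℝ} {Z : Ω → ℝ} {S θ : Ω → ℝ}

namespace IsValueFamily

/-- The penalized times `θ^λ(S)` increase with `λ`; along `λ ↑ 1` left continuity in expectation
carries `λ E[v(S)] = λ E[v(θ^λ(S))] ≤ E[φ(θ^λ(S))]` to their limit. -/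
theorem exists_integral_le_integral_reward (hV : IsValueFamily 𝓕 T μ φ V)
    (hφ : IsDominatedReward 𝓕 T μ φ Z) (hFright : ∀ t : ℝ, 𝓕 t = ⨅ s ∈ Set.Ioi t, 𝓕 s)
    (hφrc : RCE 𝓕 T μ φ) (hφlc : LCE 𝓕 T μ φ) (hS : MemT0 𝓕 T S) :
    ∃ θ, MemT0 𝓕 T θ ∧ S ≤ᵐ[μ] θ ∧
      (∀ η, MemT0 𝓕 T η → S ≤ᵐ[μ] η → V η =ᵐ[μ] φ η → θ ≤ᵐ[μ] η) ∧
      ∫ ω, V S ω ∂μ ≤ ∫ ω, φ θ ω ∂μ := by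
  set lam : ℕ → ℝ := fun k => 1 - 1 / ((k : ℝ) + 1)
  have hlam₀ : ∀ k, 0 ≤ lam k := fun k => sub_nonneg.2 <| by
    simpa using Nat.one_div_le_one_div (α := ℝ) (Nat.zero_le k)
  have hlam₁ : ∀ k, lam k < 1 := fun k => sub_lt_self 1 Nat.one_div_pos_of_nat
  have hlam_mono : ∀ k, lam k ≤ lam (k + 1) := fun k => sub_le_sub_left (by
    simpa using Nat.one_div_le_one_div (α := ℝ) k.le_succ) 1
  have hlam_lim : Tendsto lam atTop (𝓝 1) := by
    simpa [lam] using (tendsto_const_nhds (x := (1 : ℝ))).sub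
      (tendsto_one_div_add_atTop_nhds_zero_nat (𝕜 := ℝ))
  choose θ hθ hSθ using fun k => hV.exists_isPenalizedTime hφ hFright hφrc (hlam₁ k).le hS
  have hθ' := MemT0.partialSups fun k => (hθ k).1.1
  have hθθ' := partialSups_ae_eq_of_ae_monotone (μ := μ) fun k =>
    (hθ k).2 _ (hV.isPenalized_anti hφ (hlam_mono k) (hθ (k + 1)).1)
  have hup : UpAS μ (partialSups θ) (fun ω => ⨆ k, partialSups θ k ω) := ae_of_all _ fun ω =>
    ⟨fun k => (partialSups θ).mono k.le_succ ω, tendsto_atTop_ciSup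
      (fun _ _ h => (partialSups θ).mono h ω) ⟨T, by rintro _ ⟨k, rfl⟩; exact (hθ' k).le_T ω⟩⟩
  have hint : ∀ k, lam k * ∫ ω, V S ω ∂μ ≤ ∫ ω, φ (partialSups θ k) ω ∂μ := fun k => by
    rw [integral_congr_ae (hV.ae_eq_condExp_of_isPenalizedTime hφ hFright hφrc (hlam₀ k)
        (hlam₁ k) hS (hθ k)), integral_condExp hS.1.measurableSpace_le, ← integral_const_mul,
      integral_congr_ae (hφ.isConsistent.ae_eq (hθ' k) (hθ k).1.1 (hθθ' k))]
    exact integral_mono_ae ((hV.integrable hφ (hθ k).1.1).const_mul _)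
      (hφ.integrable (hθ k).1.1) (hθ k).1.2.2
  refine ⟨_, MemT0.iSup hθ', ?_, fun η hη hSη hVη => ?_, le_of_tendsto_of_tendsto'
    (by simpa using hlam_lim.mul_const (∫ ω, V S ω ∂μ)) (hφlc _ (MemT0.iSup hθ') _ hθ' hup) hint⟩
  · filter_upwards [hup] with ω ⟨hmono, hlim⟩
    exact (hSθ 0 ω).trans (by simpa using monotone_nat_of_le_succ hmono |>.ge_of_tendsto hlim 0)
  · filter_upwards [ae_all_iff.2 fun k => (hθθ' k).le.trans
      ((hθ k).2 η (hV.isPenalized_of_ae_eq hφ (hlam₁ k).le hη hSη hVη))] with ω h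
    exact ciSup_le h

lemma ae_eq_condExp_of_integral_le (hV : IsValueFamily 𝓕 T μ φ V)
    (hφ : IsDominatedReward 𝓕 T μ φ Z) (hS : MemT0 𝓕 T S) (hθ : MemT0 𝓕 T θ)
    (hSθ : S ≤ᵐ[μ] θ) (hint : ∫ ω, V S ω ∂μ ≤ ∫ ω, φ θ ω ∂μ) :
    V S =ᵐ[μ] μ[φ θ|hS.1.measurableSpace] :=
  (ae_eq_of_ae_le_of_integral_le ((hV S hS).1 θ ⟨hθ, hSθ⟩) integrable_condExp
    (hV.integrable hφ hS) (by rwa [integral_condExp hS.1.measurableSpace_le])).symm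

end IsValueFamily

end Optimality

theorem optimal_one_stopping_time_general
    {m0 : MeasurableSpace Ω} (μ : Measure Ω) [IsProbabilityMeasure μ]
    (𝓕 : Filtration ℝ m0) (T : ℝ)
    (hFright : ∀ t : ℝ, 𝓕 t = ⨅ s ∈ Set.Ioi t, 𝓕 s)
    (φ : (Ω → ℝ) → Ω → ℝ)
    (hφ : Admissible 𝓕 T μ φ)
    (Z : Ω → ℝ) (hZ : IsEssSupFam μ (MemT0 𝓕 T) φ Z) (hZint : Integrable Z μ)
    (hφrc : RCE 𝓕 T μ φ) (hφlc : LCE 𝓕 T μ φ)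
    (V : (Ω → ℝ) → Ω → ℝ)
    (hV : ∀ S (hS : MemT0 𝓕 T S),
      IsEssSupFam μ (fun θ => MemT0 𝓕 T θ ∧ S ≤ᵐ[μ] θ)
        (fun θ => μ[φ θ | hS.1.measurableSpace]) (V S)) :
    ∀ S (hS : MemT0 𝓕 T S) (θstar : Ω → ℝ),
      MemT0 𝓕 T θstar → S ≤ᵐ[μ] θstar →
      IsEssInfFam μ (fun θ => MemT0 𝓕 T θ ∧ S ≤ᵐ[μ] θ ∧ V θ =ᵐ[μ] φ θ)
        (fun θ => θ) θstar →
      V S =ᵐ[μ] μ[φ θstar | hS.1.measurableSpace] := by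
  intro S hS θstar hθstar _ hθstar_inf
  replace hV : IsValueFamily 𝓕 T μ φ V := hV
  replace hφ : IsDominatedReward 𝓕 T μ φ Z := ⟨hφ, hZ.1, hZint⟩
  obtain ⟨θ, hθ, hSθ, hθle, hint⟩ := hV.exists_integral_le_integral_reward hφ hFright hφrc hφlc hS
  have hφVθ : φ θ =ᵐ[μ] V θ := ae_eq_of_ae_le_of_integral_le (hV.reward_le hφ hθ)
    (hφ.integrable hθ) (hV.integrable hφ hθ) ((hV.integral_anti hφ hS hθ hSθ).trans hint)
  have hθθstar : θ =ᵐ[μ] θstar :=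
    (hθstar_inf.2 θ fun η hη => hθle η hη.1 hη.2.1 hη.2.2).antisymm
      (hθstar_inf.1 θ ⟨hθ, hSθ, hφVθ.symm⟩)
  exact (hV.ae_eq_condExp_of_integral_le hφ hS hθ hSθ hint).trans
    (condExp_congr_ae (hφ.isConsistent.ae_eq hθ hθstar hθθstar))

/-- (Theorem 1.2) If the admissible family `φ` is right and left
continuous along stopping times in expectation with `E[ess sup φ] < ∞`, then for
every `S ∈ T_0` the stopping time `θ*(S) = ess inf {θ ∈ T_S : v(θ) = φ(θ) a.s.}`
is optimal for `v(S)`: `v(S) = E[φ(θ*(S)) | F_S]` a.s. -/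
theorem optimal_one_stopping_time
    {m0 : MeasurableSpace Ω} (μ : Measure Ω) [IsProbabilityMeasure μ]
    (𝓕 : Filtration ℝ m0) (T : ℝ) (hT : 0 ≤ T)
    (hFright : ∀ t : ℝ, 𝓕 t = ⨅ s ∈ Set.Ioi t, 𝓕 s)
    (hFnull : ∀ A : Set Ω, μ A = 0 → MeasurableSet[𝓕 0] A)
    (φ : (Ω → ℝ) → Ω → ℝ)
    (hφ : Admissible 𝓕 T μ φ)
    (Z : Ω → ℝ) (hZ : IsEssSupFam μ (MemT0 𝓕 T) φ Z) (hZint : Integrable Z μ)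
    (hφrc : RCE 𝓕 T μ φ) (hφlc : LCE 𝓕 T μ φ)
    (V : (Ω → ℝ) → Ω → ℝ)
    (hV : ∀ S (hS : MemT0 𝓕 T S),
      IsEssSupFam μ (fun θ => MemT0 𝓕 T θ ∧ S ≤ᵐ[μ] θ)
        (fun θ => μ[φ θ | hS.1.measurableSpace]) (V S)) :
    ∀ S (hS : MemT0 𝓕 T S) (θstar : Ω → ℝ),
      MemT0 𝓕 T θstar → S ≤ᵐ[μ] θstar →
      IsEssInfFam μ (fun θ => MemT0 𝓕 T θ ∧ S ≤ᵐ[μ] θ ∧ V θ =ᵐ[μ] φ θ)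
        (fun θ => θ) θstar →
      V S =ᵐ[μ] μ[φ θstar | hS.1.measurableSpace] :=
  optimal_one_stopping_time_general μ 𝓕 T hFright φ hφ Z hZ hZint hφrc hφlc V hV
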